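/- arXiv:2111.10691 — 3 statements merged into one kernel-verified Lean document; each statement's English description precedes it below -/
import Mathlib

section
/- Let α ∈ P be a Laurent polynomial that is not a constant, and let b ∈ ℂ with b ≠ 1/2. Then the only invariant pairs for M_{α,b} are ({0},{0}) and (P,P); i.e., M_{α,b} is an irreducible module over the N=1 Ramond algebra. -/
/- STATEMENT 5: For α ∈ ℂ[t,t⁻¹] non-constant and b ≠ 1/2, the module M_{α,b} over the
N=1 Ramond algebra is irreducible: the only invariant pairs are ({0},{0}) and (P,P). -/

open LaurentPolynomial

noncomputable section

abbrev Lp := LaurentPolynomial ℂ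

/-- `L_m(f,g) = (t^m(α+D+mb)f, t^m(α+D+m(b+1/2))g)` -/
def Lop (D : Lp →ₗ[ℂ] Lp) (α : Lp) (b : ℂ) (m : ℤ) : Lp × Lp → Lp × Lp :=
  fun w => (T m * (α * w.1 + D w.1 + ((m : ℂ) * b) • w.1),
            T m * (α * w.2 + D w.2 + ((m : ℂ) * (b + 1 / 2)) • w.2))

/-- `G_m(f,g) = (−t^m g, t^m(α+D+2mb)f)` -/
def Gop (D : Lp →ₗ[ℂ] Lp) (α : Lp) (b : ℂ) (m : ℤ) : Lp × Lp → Lp × Lp :=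
  fun w => (-(T m * w.2), T m * (α * w.1 + D w.1 + (2 * (m : ℂ) * b) • w.1))

/-- `(S₀, S₁)` is an invariant pair for `M_{α,b}`: `S₀ × S₁` is stable under all
operators `L_m` and `G_m`. -/
def RInv (D : Lp →ₗ[ℂ] Lp) (α : Lp) (b : ℂ) (S₀ S₁ : Submodule ℂ Lp) : Prop :=
  ∀ m : ℤ, ∀ f ∈ S₀, ∀ g ∈ S₁,
    (Lop D α b m (f, g)).1 ∈ S₀ ∧ (Lop D α b m (f, g)).2 ∈ S₁ ∧
    (Gop D α b m (f, g)).1 ∈ S₀ ∧ (Gop D α b m (f, g)).2 ∈ S₁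

/-!
The odd component `S₁` decides everything. If `S₁ = 0`, then `G₀` sends every `f ∈ S₀` to
`(α + D) f = 0`, and comparing top and bottom coefficients shows that `α + D` is injective as
soon as `α` is not constant. If `S₁ ≠ 0`, the odd parts of `L_m` and of `G₀ ∘ G_m` differ by
`m (b - 1/2) t^m`, so `S₁` is an ideal; being also `D`-stable, it contains a monomial, hence a
unit, so `S₁ = P`, and then `S₀ ⊇ G₀ S₁ = P`.
-/

namespace LaurentPolynomial

variable {R : Type*}

lemma coeff_T_mul [Semiring R] (k n : ℤ) (g : R[T;T⁻¹]) :
    (T k * g).coeff n = g.coeff (n - k) := by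
  rw [T, AddMonoidAlgebra.coeff_single_mul_apply, one_mul, neg_add_eq_sub]

lemma mul_mem_of_T_mul_mem [CommSemiring R] {S : Submodule R R[T;T⁻¹]}
    (hS : ∀ m : ℤ, ∀ g ∈ S, T m * g ∈ S) (p : R[T;T⁻¹]) {g : R[T;T⁻¹]} (hg : g ∈ S) :
    p * g ∈ S := by
  induction p using LaurentPolynomial.induction_on' with
  | add p q hp hq => exact add_mul p q g ▸ S.add_mem hp hq
  | C_mul_T n a =>
    rw [mul_assoc, ← smul_eq_C_mul]
    exact S.smul_mem a (hS n g hg)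

lemma eq_top_of_T_mem [CommSemiring R] {S : Submodule R R[T;T⁻¹]}
    (hS : ∀ m : ℤ, ∀ g ∈ S, T m * g ∈ S) {k : ℤ} (hk : T k ∈ S) : S = ⊤ := by
  refine eq_top_iff.2 fun p _ => ?_
  have := mul_mem_of_T_mul_mem hS (p * T (-k)) hk
  rwa [mul_assoc, ← T_add, neg_add_cancel, T_zero, mul_one] at this

/-- The product of the leading terms survives in `p * q`, so `deg p + deg q ≤ deg q`. -/
lemma le_zero_of_support_mul_subset [Semiring R] [NoZeroDivisors R] {p q : R[T;T⁻¹]}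
    (hq : q ≠ 0) (h : (p * q).coeff.support ⊆ q.coeff.support) {n : ℤ}
    (hn : n ∈ p.coeff.support) : n ≤ 0 := by
  have hq' : q.coeff.support.Nonempty :=
    Finsupp.support_nonempty_iff.2 (mt AddMonoidAlgebra.coeff_eq_zero.1 hq)
  set P := p.coeff.support.max' ⟨n, hn⟩
  set Q := q.coeff.support.max' hq'
  have hcoeff : (p * q).coeff (P + Q) = p.coeff P * q.coeff Q := by
    refine AddMonoidAlgebra.coeff_mul_add_of_uniqueAdd fun a b ha hb hab => ?_
    have := Finset.le_max' _ a ha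
    have := Finset.le_max' _ b hb
    omega
  have hPQ : P + Q ∈ q.coeff.support := by
    refine h (Finsupp.mem_support_iff.2 ?_)
    rw [hcoeff]
    exact mul_ne_zero (Finsupp.mem_support_iff.1 (Finset.max'_mem _ _))
      (Finsupp.mem_support_iff.1 (Finset.max'_mem _ _))
  have := Finset.le_max' _ _ hPQ
  have := Finset.le_max' _ _ hn
  omega

lemma eq_C_of_support_mul_subset [CommSemiring R] [NoZeroDivisors R] {p q : R[T;T⁻¹]}
    (hq : q ≠ 0) (h : (p * q).coeff.support ⊆ q.coeff.support) : p = C (p.coeff 0) := by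
  -- `invert` turns the bound on the top degree of `p` into one on its bottom degree
  have hinv : (invert p * invert q).coeff.support ⊆ (invert q).coeff.support := by
    intro n hn
    simpa [← map_mul] using h (by simpa [← map_mul] using hn)
  ext n
  rw [C_apply]
  split_ifs with hn
  · rw [hn]
  · by_contra hpn
    have hle := le_zero_of_support_mul_subset hq h (Finsupp.mem_support_iff.2 hpn)
    have hge := le_zero_of_support_mul_subset (by simpa using hq) hinv (n := -n)
      (by simpa using hpn)
    omega

lemma coeff_D [CommRing R] {D : R[T;T⁻¹] →ₗ[R] R[T;T⁻¹]}
    (hD : ∀ n : ℤ, D (T n) = (n : R) • T n) (g : R[T;T⁻¹]) (n : ℤ) :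
    (D g).coeff n = (n : R) * g.coeff n := by
  induction g using LaurentPolynomial.induction_on' with
  | add p q hp hq =>
    simp only [map_add, AddMonoidAlgebra.coeff_add, Finsupp.add_apply, hp, hq, mul_add]
  | C_mul_T k a =>
    rw [← smul_eq_C_mul, map_smul, hD]
    by_cases h : k = n <;> simp [h, mul_comm]

lemma D_T_mul [CommRing R] {D : R[T;T⁻¹] →ₗ[R] R[T;T⁻¹]}
    (hD : ∀ n : ℤ, D (T n) = (n : R) • T n) (k : ℤ) (g : R[T;T⁻¹]) :
    D (T k * g) = T k * D g + (k : R) • (T k * g) := by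
  ext n
  simp only [AddMonoidAlgebra.coeff_add, AddMonoidAlgebra.coeff_smul_apply, Finsupp.add_apply,
    coeff_T_mul, coeff_D hD, smul_eq_mul]
  push_cast
  ring

lemma eq_zero_of_mul_add_D_eq_zero [CommRing R] [NoZeroDivisors R]
    {D : R[T;T⁻¹] →ₗ[R] R[T;T⁻¹]} (hD : ∀ n : ℤ, D (T n) = (n : R) • T n) {α f : R[T;T⁻¹]}
    (hα : ∀ c : R, α ≠ C c) (h : α * f + D f = 0) : f = 0 := by
  by_contra hf
  refine hα (α.coeff 0) (eq_C_of_support_mul_subset hf fun n hn => ?_)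
  rw [eq_neg_of_add_eq_zero_left h, Finsupp.mem_support_iff, AddMonoidAlgebra.coeff_neg,
    Finsupp.neg_apply, coeff_D hD, neg_ne_zero] at hn
  exact Finsupp.mem_support_iff.2 (right_ne_zero_of_mul hn)

lemma support_D_sub_smul [CommRing R] [NoZeroDivisors R] [CharZero R]
    {D : R[T;T⁻¹] →ₗ[R] R[T;T⁻¹]} (hD : ∀ n : ℤ, D (T n) = (n : R) • T n) (g : R[T;T⁻¹])
    (k : ℤ) :
    (D g - (k : R) • g).coeff.support = g.coeff.support.erase k := by
  ext n
  simp [coeff_D hD, ← sub_mul, sub_eq_zero]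

/-- `D - k` removes `k` from the support, so an element of `S` of minimal support is a
monomial. -/
lemma exists_T_mem_of_D_mem {K : Type*} [Field K] [CharZero K]
    {D : K[T;T⁻¹] →ₗ[K] K[T;T⁻¹]} (hD : ∀ n : ℤ, D (T n) = (n : K) • T n)
    {S : Submodule K K[T;T⁻¹]} (hS : ∀ g ∈ S, D g ∈ S) (hne : S ≠ ⊥) : ∃ k : ℤ, T k ∈ S := by
  obtain ⟨g₀, hg₀S, hg₀⟩ := (Submodule.ne_bot_iff S).1 hne
  obtain ⟨g, ⟨hgS, hg⟩, hmin⟩ := (InvImage.wf (fun g : K[T;T⁻¹] => g.coeff.support.card)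
    wellFounded_lt).has_min {g | g ∈ S ∧ g ≠ 0} ⟨g₀, hg₀S, hg₀⟩
  obtain ⟨k, hk⟩ : g.coeff.support.Nonempty :=
    Finsupp.support_nonempty_iff.2 (mt AddMonoidAlgebra.coeff_eq_zero.1 hg)
  have hDg : D g - (k : K) • g = 0 := by
    by_contra hDg
    refine hmin _ ⟨S.sub_mem (hS g hgS) (S.smul_mem _ hgS), hDg⟩ ?_
    show Finset.card _ < _
    rw [support_D_sub_smul hD]
    exact Finset.card_erase_lt_of_mem hk
  have hsupp : g.coeff.support = {k} := by
    have := support_D_sub_smul hD g k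
    rw [hDg, AddMonoidAlgebra.coeff_zero, Finsupp.support_zero, eq_comm,
      Finset.erase_eq_empty_iff] at this
    exact this.resolve_left (Finset.ne_empty_of_mem hk)
  set c := g.coeff k with hc
  have hgk : g = c • T k := by
    ext n
    by_cases hn : n = k
    · simp [hn, hc]
    · have : n ∉ g.coeff.support := by simp [hsupp, hn]
      simpa [Ne.symm hn] using this
  refine ⟨k, ?_⟩
  have := S.smul_mem c⁻¹ hgS
  rwa [hgk, inv_smul_smul₀ (Finsupp.mem_support_iff.1 hk)] at this

end LaurentPolynomial

namespace RInv

variable {D : Lp →ₗ[ℂ] Lp} {α : Lp} {b : ℂ} {S₀ S₁ : Submodule ℂ Lp}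

lemma T_mul_mem_even (h : RInv D α b S₀ S₁) {g : Lp} (hg : g ∈ S₁) (k : ℤ) :
    T k * g ∈ S₀ := by
  simpa [Gop] using S₀.neg_mem (h k 0 S₀.zero_mem g hg).2.2.1

lemma mul_add_D_mem_odd (h : RInv D α b S₀ S₁) {f : Lp} (hf : f ∈ S₀) :
    α * f + D f ∈ S₁ := by
  simpa [Gop] using (h 0 f hf 0 S₁.zero_mem).2.2.2

lemma T_mul_mem_odd (hD : ∀ n : ℤ, D (T n) = (n : ℂ) • T n) (hb : b ≠ 1 / 2)
    (h : RInv D α b S₀ S₁) {g : Lp} (hg : g ∈ S₁) (m : ℤ) : T m * g ∈ S₁ := by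
  rcases eq_or_ne m 0 with rfl | hm
  · simpa using hg
  have hL : T m * (α * g + D g + ((m : ℂ) * (b + 1 / 2)) • g) ∈ S₁ :=
    (h m 0 S₀.zero_mem g hg).2.1
  have hG := h.mul_add_D_mem_odd (h.T_mul_mem_even hg m)
  have hdiff := S₁.sub_mem hL hG
  have hc : (m : ℂ) * (b - 1 / 2) ≠ 0 := mul_ne_zero (Int.cast_ne_zero.2 hm) (sub_ne_zero.2 hb)
  have e : T m * (α * g + D g + ((m : ℂ) * (b + 1 / 2)) • g) - (α * (T m * g) + D (T m * g)) =
      ((m : ℂ) * (b - 1 / 2)) • (T m * g) := by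
    rw [D_T_mul hD, mul_add, mul_add, mul_smul_comm, mul_left_comm α]
    module
  rw [e] at hdiff
  have := S₁.smul_mem ((m : ℂ) * (b - 1 / 2))⁻¹ hdiff
  rwa [inv_smul_smul₀ hc] at this

lemma D_mem_odd (hD : ∀ n : ℤ, D (T n) = (n : ℂ) • T n) (hb : b ≠ 1 / 2)
    (h : RInv D α b S₀ S₁) {g : Lp} (hg : g ∈ S₁) : D g ∈ S₁ := by
  have hαD := h.mul_add_D_mem_odd (by simpa using h.T_mul_mem_even hg 0)
  have hα := mul_mem_of_T_mul_mem (fun m _ hg' => h.T_mul_mem_odd hD hb hg' m) α hg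
  simpa using S₁.sub_mem hαD hα

lemma even_eq_bot (hD : ∀ n : ℤ, D (T n) = (n : ℂ) • T n) (hα : ∀ c : ℂ, α ≠ C c)
    (h : RInv D α b S₀ S₁) (h₁ : S₁ = ⊥) : S₀ = ⊥ := by
  refine eq_bot_iff.2 fun f hf => ?_
  have := h.mul_add_D_mem_odd hf
  rw [h₁, Submodule.mem_bot] at this
  exact (Submodule.mem_bot ℂ).2 (eq_zero_of_mul_add_D_eq_zero hD hα this)

lemma eq_top (hD : ∀ n : ℤ, D (T n) = (n : ℂ) • T n) (hb : b ≠ 1 / 2)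
    (h : RInv D α b S₀ S₁) (h₁ : S₁ ≠ ⊥) : S₀ = ⊤ ∧ S₁ = ⊤ := by
  obtain ⟨k, hk⟩ := exists_T_mem_of_D_mem hD (fun g hg => h.D_mem_odd hD hb hg) h₁
  have h₁top : S₁ = ⊤ := eq_top_of_T_mem (fun m g hg => h.T_mul_mem_odd hD hb hg m) hk
  refine ⟨eq_top_iff.2 fun f _ => ?_, h₁top⟩
  simpa using h.T_mul_mem_even (by simp [h₁top] : f ∈ S₁) 0

end RInv

theorem stmt5 (D : Lp →ₗ[ℂ] Lp)
    (hD : ∀ n : ℤ, D (T n) = (n : ℂ) • T n)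
    (α : Lp) (hα : ∀ c : ℂ, α ≠ C c) (b : ℂ) (hb : b ≠ 1 / 2) :
    ∀ S₀ S₁ : Submodule ℂ Lp, RInv D α b S₀ S₁ →
      (S₀ = ⊥ ∧ S₁ = ⊥) ∨ (S₀ = ⊤ ∧ S₁ = ⊤) := by
  intro S₀ S₁ h
  by_cases h₁ : S₁ = ⊥
  · exact Or.inl ⟨h.even_eq_bot hD hα h₁, h₁⟩
  · exact Or.inr (h.eq_top hD hb h₁)

end
end

section
/- Let α ∈ P be a Laurent polynomial that is not a constant, and let b ∈ ℂ with b ≠ 1/2. Then the only invariant pairs for V_{α,b} are ({0},{0}) and (P,P); i.e., V_{α,b} is an irreducible module over the N=2 Ramond algebra. -/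
/- STATEMENT 8: For α ∈ ℂ[t,t⁻¹] non-constant and b ≠ 1/2, the module V_{α,b} over the
N=2 Ramond algebra is irreducible: the only invariant pairs are ({0},{0}) and (P,P). -/

open LaurentPolynomial

noncomputable section

/-- `H_m(f,g) = (−2b·t^m f, (1−2b)·t^m g)` -/
def Hop (b : ℂ) (m : ℤ) : Lp × Lp → Lp × Lp :=
  fun w => ((-2 * b) • (T m * w.1), (1 - 2 * b) • (T m * w.2))

/-- `G_m⁺(f,g) = (0, −2t^m(α+D+2mb)f)` -/
def Gp (D : Lp →ₗ[ℂ] Lp) (α : Lp) (b : ℂ) (m : ℤ) : Lp × Lp → Lp × Lp :=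
  fun w => (0, (-2 : ℂ) • (T m * (α * w.1 + D w.1 + (2 * (m : ℂ) * b) • w.1)))

/-- `G_m⁻(f,g) = (t^m g, 0)` -/
def Gm (m : ℤ) : Lp × Lp → Lp × Lp :=
  fun w => (T m * w.2, 0)

/-- `(S₀, S₁)` is an invariant pair for `V_{α,b}`: `S₀ × S₁` is stable under all
operators `L_m`, `H_m`, `G_m⁺`, `G_m⁻`. -/
def TInv (D : Lp →ₗ[ℂ] Lp) (α : Lp) (b : ℂ) (S₀ S₁ : Submodule ℂ Lp) : Prop :=
  ∀ m : ℤ, ∀ f ∈ S₀, ∀ g ∈ S₁,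
    (Lop D α b m (f, g)).1 ∈ S₀ ∧ (Lop D α b m (f, g)).2 ∈ S₁ ∧
    (Hop b m (f, g)).1 ∈ S₀ ∧ (Hop b m (f, g)).2 ∈ S₁ ∧
    (Gp D α b m (f, g)).1 ∈ S₀ ∧ (Gp D α b m (f, g)).2 ∈ S₁ ∧
    (Gm m (f, g)).1 ∈ S₀ ∧ (Gm m (f, g)).2 ∈ S₁

/-!
Since `b ≠ 1/2`, the operators `H_m` show that the odd part `S₁` is stable under multiplication
by every `t^m`, and then `L_0` shows that it is stable under `D`. The monomials are eigenvectors
of `D` with pairwise distinct eigenvalues, so a nonzero `D`-stable subspace contains a monomial;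
hence `S₁ ≠ 0` forces `S₁ = P`, and `G_0⁻` then gives `S₀ = P`. If `S₁ = 0`, then `G_0⁺` gives
`α f + D f = 0` for every `f ∈ S₀`. For `f ≠ 0` this says `supp (α f) ⊆ supp f`, and comparing
the largest and the smallest exponents on both sides forces `α` to be constant.
-/

namespace LaurentPolynomial

section Semiring

variable {R : Type*} [Semiring R]

lemma coeff_mul_add_of_forall_le {p q : R[T;T⁻¹]} {a b : ℤ}
    (hp : ∀ i ∈ p.coeff.support, i ≤ a) (hq : ∀ j ∈ q.coeff.support, j ≤ b) :
    (p * q).coeff (a + b) = p.coeff a * q.coeff b :=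
  AddMonoidAlgebra.coeff_mul_add_of_uniqueAdd fun i j hi hj _ => by
    have := hp i hi; have := hq j hj; omega

lemma mul_mem_of_forall_T_mul_mem {S : Submodule R R[T;T⁻¹]}
    (hS : ∀ m : ℤ, ∀ g ∈ S, T m * g ∈ S) (p : R[T;T⁻¹]) {g : R[T;T⁻¹]} (hg : g ∈ S) :
    p * g ∈ S := by
  induction p using LaurentPolynomial.induction_on' with
  | add p q hp hq => rw [add_mul]; exact S.add_mem hp hq
  | C_mul_T n a => rw [← smul_eq_C_mul, smul_mul_assoc]; exact S.smul_mem a (hS n g hg)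

lemma eq_top_of_forall_T_mem {S : Submodule R R[T;T⁻¹]} (hS : ∀ n : ℤ, T n ∈ S) : S = ⊤ := by
  refine Submodule.eq_top_iff'.2 fun p => ?_
  induction p using LaurentPolynomial.induction_on' with
  | add p q hp hq => exact S.add_mem hp hq
  | C_mul_T n a => rw [← smul_eq_C_mul]; exact S.smul_mem a (hS n)

lemma nonpos_of_support_mul_subset [NoZeroDivisors R] {α f : R[T;T⁻¹]} (hf : f ≠ 0)
    (h : (α * f).coeff.support ⊆ f.coeff.support) {n : ℤ} (hn : n ∈ α.coeff.support) :
    n ≤ 0 := by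
  have hαs : α.coeff.support.Nonempty := ⟨n, hn⟩
  have hfs : f.coeff.support.Nonempty := by simpa using hf
  set M := α.coeff.support.max' hαs
  set N := f.coeff.support.max' hfs
  have htop : (α * f).coeff (M + N) = α.coeff M * f.coeff N :=
    coeff_mul_add_of_forall_le (α.coeff.support.le_max' · ·) (f.coeff.support.le_max' · ·)
  have hMN : M + N ∈ f.coeff.support := by
    refine h (Finsupp.mem_support_iff.2 ?_)
    rw [htop]
    exact mul_ne_zero (Finsupp.mem_support_iff.1 (α.coeff.support.max'_mem hαs))
      (Finsupp.mem_support_iff.1 (f.coeff.support.max'_mem hfs))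
  have := f.coeff.support.le_max' _ hMN
  have := α.coeff.support.le_max' n hn
  omega

end Semiring

section CommSemiring

variable {R : Type*} [CommSemiring R]

lemma support_invert (p : R[T;T⁻¹]) :
    (invert p).coeff.support = p.coeff.support.map (Equiv.neg ℤ).toEmbedding := by
  ext n; simp [Equiv.neg_apply]

lemma eq_C_of_support_mul_subset_s8 [NoZeroDivisors R] {α f : R[T;T⁻¹]} (hf : f ≠ 0)
    (h : (α * f).coeff.support ⊆ f.coeff.support) : α = C (α.coeff 0) := by
  have hinv : (invert α * invert f).coeff.support ⊆ (invert f).coeff.support := by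
    rw [← map_mul, support_invert, support_invert]
    exact Finset.map_subset_map.2 h
  have hsupp : α.coeff.support ⊆ {0} := fun n hn => by
    have h₁ := nonpos_of_support_mul_subset hf h hn
    have h₂ := nonpos_of_support_mul_subset (by simpa using hf) hinv (n := -n) (by simpa using hn)
    simp only [Finset.mem_singleton]; omega
  ext n
  rw [C_apply]
  split_ifs with hn
  · rw [hn]
  · exact Finsupp.notMem_support_iff.1 fun h => hn (Finset.mem_singleton.1 (hsupp h))

end CommSemiring

def IsDegreeOperator {R : Type*} [Ring R] (D : R[T;T⁻¹] →ₗ[R] R[T;T⁻¹]) : Prop :=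
  ∀ n : ℤ, D (T n) = (n : R) • T n

namespace IsDegreeOperator

lemma coeff_apply {R : Type*} [Ring R] {D : R[T;T⁻¹] →ₗ[R] R[T;T⁻¹]} (hD : IsDegreeOperator D)
    (f : R[T;T⁻¹]) (k : ℤ) : (D f).coeff k = k * f.coeff k := by
  induction f using LaurentPolynomial.induction_on' with
  | add p q hp hq =>
    simp only [map_add, AddMonoidAlgebra.coeff_add, Finsupp.add_apply, hp, hq, mul_add]
  | C_mul_T n a =>
    rw [← smul_eq_C_mul, map_smul, hD, smul_smul]
    simp only [AddMonoidAlgebra.coeff_smul_apply, T_apply, smul_eq_mul]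
    split_ifs with h <;> simp [h, Int.cast_comm]

lemma eq_zero_of_mul_add_eq_zero {R : Type*} [CommRing R] [NoZeroDivisors R]
    {D : R[T;T⁻¹] →ₗ[R] R[T;T⁻¹]} (hD : IsDegreeOperator D) {α f : R[T;T⁻¹]}
    (hα : ∀ c : R, α ≠ C c) (h : α * f + D f = 0) : f = 0 := by
  by_contra hf
  refine hα _ (eq_C_of_support_mul_subset_s8 hf fun k hk => ?_)
  rw [eq_neg_of_add_eq_zero_left h, Finsupp.mem_support_iff, AddMonoidAlgebra.coeff_neg,
    Finsupp.neg_apply, neg_ne_zero, hD.coeff_apply] at hk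
  exact Finsupp.mem_support_iff.2 (right_ne_zero_of_mul hk)

variable {K : Type*} [Field K] [CharZero K] {D : K[T;T⁻¹] →ₗ[K] K[T;T⁻¹]}

lemma exists_T_mem (hD : IsDegreeOperator D) {S : Submodule K K[T;T⁻¹]}
    (hS : ∀ g ∈ S, D g ∈ S) {g : K[T;T⁻¹]} (hg : g ∈ S) (hg0 : g ≠ 0) : ∃ k : ℤ, T k ∈ S := by
  induction hcard : g.coeff.support.card using Nat.strong_induction_on generalizing g with
  | _ n ih =>
  obtain ⟨k, hk⟩ : g.coeff.support.Nonempty := by simpa using hg0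
  set h := D g - (k : K) • g
  have hcoeff (j : ℤ) : h.coeff j = (j - k) * g.coeff j := by
    simp only [h, AddMonoidAlgebra.coeff_sub, Finsupp.sub_apply, AddMonoidAlgebra.coeff_smul_apply,
      hD.coeff_apply, smul_eq_mul, sub_mul]
  -- `h` has the support of `g` with `k` removed, and vanishes only for a multiple of `T k`.
  by_cases h0 : h = 0
  · have hmono : g.coeff k • T k = g := by
      ext j
      rw [AddMonoidAlgebra.coeff_smul_apply, T_apply, smul_eq_mul]
      split_ifs with hj
      · rw [hj, mul_one]
      · have := hcoeff j
        rw [h0, AddMonoidAlgebra.coeff_zero, Finsupp.coe_zero, Pi.zero_apply, eq_comm, mul_eq_zero,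
          sub_eq_zero, Int.cast_inj] at this
        rw [mul_zero, this.resolve_left (Ne.symm hj)]
    refine ⟨k, ?_⟩
    rw [(eq_inv_smul_iff₀ (Finsupp.mem_support_iff.1 hk)).2 hmono]
    exact S.smul_mem _ hg
  · have hsub : h.coeff.support ⊂ g.coeff.support := by
      refine ⟨fun j hj => ?_, fun hsub => ?_⟩
      · rw [Finsupp.mem_support_iff, hcoeff] at hj
        exact Finsupp.mem_support_iff.2 (right_ne_zero_of_mul hj)
      · simpa [hcoeff] using hsub hk
    exact ih _ (hcard ▸ Finset.card_lt_card hsub) (S.sub_mem (hS g hg) (S.smul_mem _ hg)) h0 rfl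

lemma eq_top_of_forall_T_mul_mem (hD : IsDegreeOperator D) {S : Submodule K K[T;T⁻¹]}
    (hS : ∀ g ∈ S, D g ∈ S) (hT : ∀ m : ℤ, ∀ g ∈ S, T m * g ∈ S) (hne : S ≠ ⊥) : S = ⊤ := by
  obtain ⟨g, hg, hg0⟩ := S.ne_bot_iff.1 hne
  obtain ⟨k, hk⟩ := hD.exists_T_mem hS hg hg0
  refine eq_top_of_forall_T_mem fun n => ?_
  simpa only [← T_add, sub_add_cancel] using hT (n - k) _ hk

end IsDegreeOperator

end LaurentPolynomial

namespace TInv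

variable {D : Lp →ₗ[ℂ] Lp} {α : Lp} {b : ℂ} {S₀ S₁ : Submodule ℂ Lp}

lemma T_mul_mem_odd (h : TInv D α b S₀ S₁) (hb : b ≠ 1 / 2) (m : ℤ) {g : Lp} (hg : g ∈ S₁) :
    T m * g ∈ S₁ := by
  have hb' : 1 - 2 * b ≠ 0 := fun h => hb (by linear_combination -h / 2)
  have := S₁.smul_mem (1 - 2 * b)⁻¹ (h m 0 S₀.zero_mem g hg).2.2.2.1
  rwa [Hop, smul_smul, inv_mul_cancel₀ hb', one_smul] at this

lemma apply_mem_odd (h : TInv D α b S₀ S₁) (hb : b ≠ 1 / 2) {g : Lp} (hg : g ∈ S₁) : D g ∈ S₁ := by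
  have hL := (h 0 0 S₀.zero_mem g hg).2.1
  simp only [Lop, T_zero, one_mul, Int.cast_zero, zero_mul, zero_smul, add_zero] at hL
  simpa using S₁.sub_mem hL (mul_mem_of_forall_T_mul_mem (fun m _ => h.T_mul_mem_odd hb m) α hg)

lemma mul_add_apply_mem_odd (h : TInv D α b S₀ S₁) {f : Lp} (hf : f ∈ S₀) : α * f + D f ∈ S₁ := by
  have := S₁.smul_mem (-2 : ℂ)⁻¹ (h 0 f hf 0 S₁.zero_mem).2.2.2.2.2.1
  simpa [Gp, smul_smul] using this

lemma odd_le_even (h : TInv D α b S₀ S₁) : S₁ ≤ S₀ := fun g hg => by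
  simpa [Gm] using (h 0 0 S₀.zero_mem g hg).2.2.2.2.2.2.1

end TInv

theorem stmt8 (D : Lp →ₗ[ℂ] Lp)
    (hD : ∀ n : ℤ, D (T n) = (n : ℂ) • T n)
    (α : Lp) (hα : ∀ c : ℂ, α ≠ C c) (b : ℂ) (hb : b ≠ 1 / 2) :
    ∀ S₀ S₁ : Submodule ℂ Lp, TInv D α b S₀ S₁ →
      (S₀ = ⊥ ∧ S₁ = ⊥) ∨ (S₀ = ⊤ ∧ S₁ = ⊤) := by
  intro S₀ S₁ h
  rcases eq_or_ne S₁ ⊥ with h₁ | h₁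
  · refine Or.inl ⟨(Submodule.eq_bot_iff S₀).2 fun f hf => ?_, h₁⟩
    refine IsDegreeOperator.eq_zero_of_mul_add_eq_zero hD hα ?_
    simpa [h₁] using h.mul_add_apply_mem_odd hf
  · have htop : S₁ = ⊤ := IsDegreeOperator.eq_top_of_forall_T_mul_mem hD
      (fun _ => h.apply_mem_odd hb) (fun m _ => h.T_mul_mem_odd hb m) h₁
    exact Or.inr ⟨top_le_iff.1 (htop ▸ h.odd_le_even), htop⟩

end
end

section
/- Consider the module V_{0,0} (the case α = 0, b = 0), i.e., the operators L_m(f,g) = (t^m D f, t^m(D+m/2)g), H_m(f,g) = (0, t^m g), G_m⁺(f,g) = (0, −2t^m D f), G_m⁻(f,g) = (t^m g, 0) on W. Then: (i) the pair (ℂ·1, {0}) is invariant for V_{0,0}, and every operator L_m, H_m, G_m⁺, G_m⁻ vanishes on ℂ·1 × {0}; (ii) every invariant pair (S₀,S₁) with ℂ·1 ⊆ S₀ and (S₀,S₁) ≠ (ℂ·1, {0}) satisfies S₀ = P and S₁ = P. In particular, the quotient V_t = (ℂ[t,t⁻¹] ⊕ ξℂ[t,t⁻¹]) / (ℂ ⊕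 ξ0) is an irreducible module over the N=2 Ramond algebra. -/
/-! For `α = 0`, the operator `G⁺_0` gives `D S₀ ⊆ S₁`, `L_0` makes `S₁` stable under `D`, and
`H_m`, `G⁻_m` give `t^m S₁ ⊆ S₁` and `t^m S₁ ⊆ S₀`. Since `D` acts diagonally on the monomials with
pairwise distinct eigenvalues, a nonzero `D`-stable subspace contains a monomial (`D - n` shrinks
the support of any non-eigenvector); so `S₁ ≠ 0` forces `S₁ = P`, and then `S₀ ⊇ t^m S₁ = P`.
If instead `S₁ = 0`, then `D S₀ = 0`, i.e. `S₀ ⊆ ker D = ℂ·1`. -/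

open LaurentPolynomial

noncomputable section

namespace LaurentPolynomial

theorem submodule_eq_top_of_forall_T_mem {R : Type*} [CommSemiring R]
    {S : Submodule R R[T;T⁻¹]} (h : ∀ n : ℤ, T n ∈ S) : S = ⊤ := by
  refine eq_top_iff.2 fun f _ => ?_
  induction f using LaurentPolynomial.induction_on' with
  | add p q hp hq => exact S.add_mem (hp trivial) (hq trivial)
  | C_mul_T n a => rw [← smul_eq_C_mul]; exact S.smul_mem a (h n)

section CommRing

variable {R : Type*} [CommRing R] {D : R[T;T⁻¹] →ₗ[R] R[T;T⁻¹]}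

theorem coeff_apply_of_apply_T (hD : ∀ n : ℤ, D (T n) = (n : R) • T n) (f : R[T;T⁻¹]) (k : ℤ) :
    (D f).coeff k = k * f.coeff k := by
  induction f using LaurentPolynomial.induction_on' with
  | add p q hp hq => simp [hp, hq, mul_add]
  | C_mul_T n a =>
    rw [← smul_eq_C_mul, map_smul, hD]
    by_cases h : n = k
    · subst h; simp [smul_smul, mul_comm]
    · simp [h]

theorem coeff_apply_sub_smul_of_apply_T (hD : ∀ n : ℤ, D (T n) = (n : R) • T n)
    (f : R[T;T⁻¹]) (n k : ℤ) : (D f - (n : R) • f).coeff k = (k - n) * f.coeff k := by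
  simp [coeff_apply_of_apply_T hD, sub_mul]

theorem apply_eq_zero_of_mem_span_one (hD : ∀ n : ℤ, D (T n) = (n : R) • T n) {f : R[T;T⁻¹]}
    (hf : f ∈ Submodule.span R {1}) : D f = 0 := by
  obtain ⟨c, rfl⟩ := Submodule.mem_span_singleton.1 hf
  rw [map_smul, ← T_zero, hD, Int.cast_zero, zero_smul, smul_zero]

end CommRing

variable {K : Type*} [Field K] [CharZero K] {D : K[T;T⁻¹] →ₗ[K] K[T;T⁻¹]}

theorem eq_smul_T_of_apply_eq_smul (hD : ∀ n : ℤ, D (T n) = (n : K) • T n)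
    {f : K[T;T⁻¹]} {n : ℤ} (hf : D f = (n : K) • f) : f = f.coeff n • T n := by
  refine LaurentPolynomial.ext fun k => ?_
  have hk := coeff_apply_sub_smul_of_apply_T hD f n k
  rw [hf, sub_self] at hk
  by_cases h : n = k
  · subst h; simp
  · have : (k : K) - n ≠ 0 := sub_ne_zero.2 (by exact_mod_cast Ne.symm h)
    simp [h, (mul_eq_zero.1 hk.symm).resolve_left this]

theorem support_apply_sub_smul_of_apply_T (hD : ∀ n : ℤ, D (T n) = (n : K) • T n)
    (f : K[T;T⁻¹]) (n : ℤ) : (D f - (n : K) • f).coeff.support = f.coeff.support.erase n := by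
  ext k
  rw [Finsupp.mem_support_iff, coeff_apply_sub_smul_of_apply_T hD, Finset.mem_erase,
    Finsupp.mem_support_iff, mul_ne_zero_iff, sub_ne_zero, Int.cast_inj.ne]

theorem mem_span_one_of_apply_eq_zero (hD : ∀ n : ℤ, D (T n) = (n : K) • T n)
    {f : K[T;T⁻¹]} (hf : D f = 0) : f ∈ Submodule.span K {1} := by
  have : D f = ((0 : ℤ) : K) • f := by rw [hf, Int.cast_zero, zero_smul]
  rw [eq_smul_T_of_apply_eq_smul hD this, T_zero]
  exact Submodule.smul_mem _ _ (Submodule.mem_span_singleton_self 1)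

theorem exists_T_mem_of_forall_apply_mem (hD : ∀ n : ℤ, D (T n) = (n : K) • T n)
    {S : Submodule K K[T;T⁻¹]} (hS : ∀ f ∈ S, D f ∈ S) (hS₀ : S ≠ ⊥) : ∃ n : ℤ, T n ∈ S := by
  obtain ⟨f, hfS, hf₀⟩ := (Submodule.ne_bot_iff S).1 hS₀
  induction hN : f.coeff.support.card using Nat.strong_induction_on generalizing f with
  | _ N ih =>
  obtain ⟨n, hn⟩ := Finsupp.support_nonempty_iff.2 (mt AddMonoidAlgebra.coeff_eq_zero.1 hf₀)
  by_cases hfn : D f = (n : K) • f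
  · have hTn : (f.coeff n)⁻¹ • f = T n := by
      conv_lhs => arg 2; rw [eq_smul_T_of_apply_eq_smul hD hfn]
      rw [smul_smul, inv_mul_cancel₀ (Finsupp.mem_support_iff.1 hn), one_smul]
    exact ⟨n, hTn ▸ S.smul_mem _ hfS⟩
  · refine ih _ ?_ (D f - (n : K) • f) (S.sub_mem (hS f hfS) (S.smul_mem _ hfS))
      (sub_ne_zero.2 hfn) rfl
    rw [support_apply_sub_smul_of_apply_T hD, Finset.card_erase_of_mem hn, ← hN]
    exact Nat.sub_lt (Finset.card_pos.2 ⟨n, hn⟩) one_pos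

end LaurentPolynomial

theorem operators_eq_zero_of_mem_span_one {D : Lp →ₗ[ℂ] Lp}
    (hD : ∀ n : ℤ, D (T n) = (n : ℂ) • T n) (m : ℤ) {f : Lp}
    (hf : f ∈ Submodule.span ℂ {(1 : Lp)}) :
    Lop D 0 0 m (f, 0) = 0 ∧ Hop 0 m (f, 0) = 0 ∧ Gp D 0 0 m (f, 0) = 0 ∧ Gm m (f, 0) = 0 := by
  have hDf := apply_eq_zero_of_mem_span_one hD hf
  obtain ⟨c, rfl⟩ := Submodule.mem_span_singleton.1 hf
  simp [Lop, Hop, Gp, Gm, hDf, Prod.ext_iff]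

theorem tInv_span_one_bot {D : Lp →ₗ[ℂ] Lp} (hD : ∀ n : ℤ, D (T n) = (n : ℂ) • T n) :
    TInv D 0 0 (Submodule.span ℂ {(1 : Lp)}) ⊥ := by
  intro m f hf g hg
  rw [Submodule.mem_bot] at hg
  subst hg
  obtain ⟨hL, hH, hGp, hGm⟩ := operators_eq_zero_of_mem_span_one hD m hf
  simp only [hL, hH, hGp, hGm, Prod.fst_zero, Prod.snd_zero, Submodule.zero_mem, and_self]

namespace TInv

variable {D : Lp →ₗ[ℂ] Lp} {α : Lp} {b : ℂ} {S₀ S₁ : Submodule ℂ Lp}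

theorem apply_mem_of_mem_left (h : TInv D 0 b S₀ S₁) {f : Lp} (hf : f ∈ S₀) : D f ∈ S₁ := by
  obtain ⟨-, -, -, -, -, hG, -, -⟩ := h 0 f hf 0 S₁.zero_mem
  simpa [Gp, Submodule.smul_mem_iff] using hG

theorem apply_mem_of_mem_right (h : TInv D 0 b S₀ S₁) {g : Lp} (hg : g ∈ S₁) : D g ∈ S₁ := by
  obtain ⟨-, hL, -⟩ := h 0 0 S₀.zero_mem g hg
  simpa [Lop] using hL

theorem T_mul_mem_right (h : TInv D α b S₀ S₁) (hb : 1 - 2 * b ≠ 0) (m : ℤ) {g : Lp}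
    (hg : g ∈ S₁) : T m * g ∈ S₁ := by
  obtain ⟨-, -, -, hH, -⟩ := h m 0 S₀.zero_mem g hg
  exact (Submodule.smul_mem_iff _ hb).1 hH

theorem T_mul_mem_left (h : TInv D α b S₀ S₁) (m : ℤ) {g : Lp} (hg : g ∈ S₁) :
    T m * g ∈ S₀ :=
  (h m 0 S₀.zero_mem g hg).2.2.2.2.2.2.1

theorem le_span_one_of_eq_bot (h : TInv D 0 b S₀ ⊥) (hD : ∀ n : ℤ, D (T n) = (n : ℂ) • T n) :
    S₀ ≤ Submodule.span ℂ {(1 : Lp)} := fun _ hf =>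
  mem_span_one_of_apply_eq_zero hD ((Submodule.mem_bot ℂ).1 (h.apply_mem_of_mem_left hf))

theorem eq_top_of_ne_bot (h : TInv D 0 b S₀ S₁) (hD : ∀ n : ℤ, D (T n) = (n : ℂ) • T n)
    (hb : 1 - 2 * b ≠ 0) (hS₁ : S₁ ≠ ⊥) : S₀ = ⊤ ∧ S₁ = ⊤ := by
  obtain ⟨k, hk⟩ := exists_T_mem_of_forall_apply_mem hD (fun _ => h.apply_mem_of_mem_right) hS₁
  have hS₁_top : S₁ = ⊤ := submodule_eq_top_of_forall_T_mem fun n => by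
    simpa only [← T_add, sub_add_cancel] using h.T_mul_mem_right hb (n - k) hk
  refine ⟨submodule_eq_top_of_forall_T_mem fun n => ?_, hS₁_top⟩
  simpa using h.T_mul_mem_left n (hS₁_top ▸ Submodule.mem_top : (1 : Lp) ∈ S₁)

end TInv

theorem stmt10 (D : Lp →ₗ[ℂ] Lp)
    (hD : ∀ n : ℤ, D (T n) = (n : ℂ) • T n) :
    (TInv D 0 0 (Submodule.span ℂ {(1 : Lp)}) ⊥ ∧
      (∀ m : ℤ, ∀ f ∈ Submodule.span ℂ {(1 : Lp)},
        Lop D 0 0 m (f, 0) = 0 ∧ Hop 0 m (f, 0) = 0 ∧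
        Gp D 0 0 m (f, 0) = 0 ∧ Gm m (f, 0) = 0)) ∧
    (∀ S₀ S₁ : Submodule ℂ Lp, TInv D 0 0 S₀ S₁ →
      Submodule.span ℂ {(1 : Lp)} ≤ S₀ →
      ¬(S₀ = Submodule.span ℂ {(1 : Lp)} ∧ S₁ = ⊥) →
      S₀ = ⊤ ∧ S₁ = ⊤) := by
  refine ⟨⟨tInv_span_one_bot hD, fun m _ => operators_eq_zero_of_mem_span_one hD m⟩,
    fun S₀ S₁ hInv hle hne => ?_⟩
  by_cases hS₁ : S₁ = ⊥
  · subst hS₁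
    exact absurd ⟨le_antisymm (hInv.le_span_one_of_eq_bot hD) hle, rfl⟩ hne
  · exact hInv.eq_top_of_ne_bot hD (by norm_num) hS₁

end
end
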